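/- For a > 0 and ε ≥ 0, Φ(a/2 − ε/a) − e^ε·Φ(−a/2 − ε/a) is strictly increasing in a on (0, ∞), where Φ is the standard normal CDF. -/

import Mathlib

/-! The derivative of `a ↦ Φ(a/2 - ε/a) - e^ε Φ(-a/2 - ε/a)` is `φ(a/2 - ε/a) (1/2 + ε/a²) +
e^ε φ(-a/2 - ε/a) (1/2 - ε/a²)`, and `e^ε φ(-a/2 - ε/a) = φ(a/2 - ε/a)` because the two
squared arguments differ by `2ε`. Hence the derivative collapses to the density `φ(a/2 - ε/a) > 0`. -/

open MeasureTheory Real Set Filter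

/-- The standard normal CDF. -/
noncomputable def stdΦ (x : ℝ) : ℝ :=
  (Real.sqrt (2 * Real.pi))⁻¹ * ∫ t in Set.Iic x, Real.exp (-t ^ 2 / 2)

theorem hasDerivAt_integral_Iic {f : ℝ → ℝ} (hf : Continuous f) (hfi : Integrable f) (x : ℝ) :
    HasDerivAt (fun y => ∫ t in Iic y, f t) (f x) x := by
  have hsplit : (fun y => ∫ t in Iic y, f t) =
      fun y => (∫ t in Iic 0, f t) + ∫ t in (0 : ℝ)..y, f t := by
    funext y
    rw [← intervalIntegral.integral_Iic_sub_Iic hfi.integrableOn hfi.integrableOn]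
    ring
  rw [hsplit]
  exact ((hf.integral_hasStrictDerivAt 0 x).hasDerivAt).const_add _

theorem integrable_exp_neg_sq_div_two : Integrable fun t : ℝ => exp (-t ^ 2 / 2) := by
  simpa [div_eq_inv_mul, neg_mul] using integrable_exp_neg_mul_sq (b := (1 / 2 : ℝ)) (by norm_num)

theorem hasDerivAt_stdΦ (x : ℝ) :
    HasDerivAt stdΦ ((√(2 * π))⁻¹ * exp (-x ^ 2 / 2)) x :=
  (hasDerivAt_integral_Iic (by fun_prop) integrable_exp_neg_sq_div_two x).const_mul _

theorem exp_mul_exp_neg_sq_shift (ε : ℝ) {a : ℝ} (ha : a ≠ 0) :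
    exp ε * exp (-(-(a / 2) - ε / a) ^ 2 / 2) = exp (-(a / 2 - ε / a) ^ 2 / 2) := by
  rw [← exp_add]
  congr 1
  field_simp
  ring

theorem hasDerivAt_stdΦ_sub_exp_mul_stdΦ (ε : ℝ) {a : ℝ} (ha : a ≠ 0) :
    HasDerivAt (fun a : ℝ => stdΦ (a / 2 - ε / a) - exp ε * stdΦ (-(a / 2) - ε / a))
      ((√(2 * π))⁻¹ * exp (-(a / 2 - ε / a) ^ 2 / 2)) a := by
  have hinv : HasDerivAt (fun a : ℝ => ε / a) (-(ε / a ^ 2)) a := by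
    simpa [div_eq_mul_inv] using (hasDerivAt_inv ha).const_mul ε
  have hu : HasDerivAt (fun a : ℝ => a / 2 - ε / a) (1 / 2 + ε / a ^ 2) a :=
    (((hasDerivAt_id a).div_const 2).sub hinv).congr_deriv (by ring)
  have hv : HasDerivAt (fun a : ℝ => -(a / 2) - ε / a) (-(1 / 2) + ε / a ^ 2) a :=
    (((hasDerivAt_id a).div_const 2).neg.sub hinv).congr_deriv (by ring)
  refine (((hasDerivAt_stdΦ _).comp a hu).sub
    (((hasDerivAt_stdΦ _).comp a hv).const_mul (exp ε))).congr_deriv ?_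
  rw [show ∀ c u v : ℝ, exp ε * (c * u * v) = c * (exp ε * u) * v by intros; ring,
    exp_mul_exp_neg_sq_shift ε ha]
  ring

theorem stmt10_general (ε : ℝ) :
    StrictMonoOn (fun a : ℝ =>
      stdΦ (a / 2 - ε / a) - Real.exp ε * stdΦ (-(a / 2) - ε / a)) (Set.Ioi 0) := by
  have hderiv (a : ℝ) (ha : a ∈ Ioi 0) := hasDerivAt_stdΦ_sub_exp_mul_stdΦ ε (ne_of_gt ha)
  refine strictMonoOn_of_hasDerivWithinAt_pos (convex_Ioi 0)
    (f' := fun a => (√(2 * π))⁻¹ * exp (-(a / 2 - ε / a) ^ 2 / 2))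
    (fun a ha => (hderiv a ha).continuousAt.continuousWithinAt) ?_ fun _ _ => by positivity
  rw [interior_Ioi]
  exact fun a ha => (hderiv a ha).hasDerivWithinAt

theorem stmt10 (ε : ℝ) (hε : 0 ≤ ε) :
    StrictMonoOn (fun a : ℝ =>
      stdΦ (a / 2 - ε / a) - Real.exp ε * stdΦ (-(a / 2) - ε / a)) (Set.Ioi 0) :=
  stmt10_general ε
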